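/- arXiv:1612.02402 — 2 statements merged into one kernel-verified Lean document; each statement's English description precedes it below -/
import Mathlib

section
/- Let (V, E, s, t) be a finite directed multigraph with V nonempty whose underlying undirected graph is connected, let n ≥ 1, let u : E → ℚ^n, set g := #E − #V + 1, and let W := {a : E → ℚ | for every c ∈ ker ∂, ∑_{e ∈ E} (c e)·(a e) • (u e) = 0 in ℚ^n}. If there exists a nonzero c₀ ∈ ker ∂ such that the linear span of {u e | c₀ e ≠ 0} is a proper subspace of ℚ^n, then codim W < n·g, where codim W is the codimension of W in (E → ℚ). In particular, if some edge e is self-adjacent (s e = t e) and u e = 0, then codim W < n·g (the indicator function of e lies in ker ∂ and its associated directions span the zero subspace). -/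
open scoped Classical

/-- The underlying undirected graph of the directed multigraph `(V, E, s, t)` is connected:
any two vertices are joined by a chain of edges traversed in either direction. -/
def GraphConnected {V E : Type*} (s t : E → V) : Prop :=
  ∀ v w : V, Relation.ReflTransGen
    (fun x y => ∃ e, s e = x ∧ t e = y ∨ s e = y ∧ t e = x) v w

/-- The boundary map `∂ : (E → ℚ) → (V → ℚ)`,
`(∂ a) v = (∑ edges ending at v) − (∑ edges starting at v)`. -/
noncomputable def boundaryMap {V E : Type*} [Fintype E] (s t : E → V) :
    (E → ℚ) →ₗ[ℚ] (V → ℚ) where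
  toFun a := fun v => (∑ e ∈ Finset.univ.filter fun e => t e = v, a e)
      - (∑ e ∈ Finset.univ.filter fun e => s e = v, a e)
  map_add' a b := by
    funext v
    simp only [Pi.add_apply, Finset.sum_add_distrib]
    ring
  map_smul' c a := by
    funext v
    simp only [Pi.smul_apply, smul_eq_mul, ← Finset.mul_sum, RingHom.id_apply]
    ring

/-- For a fixed cycle `c`, the linear map `a ↦ ∑ e, (c e * a e) • u e`. -/
noncomputable def cyclePairing {E : Type*} [Fintype E] {n : ℕ} (u : E → Fin n → ℚ)
    (c : E → ℚ) : (E → ℚ) →ₗ[ℚ] (Fin n → ℚ) where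
  toFun a := ∑ e : E, (c e * a e) • u e
  map_add' a b := by
    simp [mul_add, add_smul, Finset.sum_add_distrib]
  map_smul' r a := by
    simp [Finset.smul_sum, smul_smul, mul_left_comm]

/-- The subspace `W = {a : E → ℚ | ∀ c ∈ ker ∂, ∑ e, (c e * a e) • u e = 0}`. -/
noncomputable def Wsub {V E : Type*} [Fintype E] {n : ℕ} (s t : E → V)
    (u : E → Fin n → ℚ) : Submodule ℚ (E → ℚ) :=
  ⨅ c ∈ LinearMap.ker (boundaryMap s t), LinearMap.ker (cyclePairing u c)

/-! On the cycle space `K = ker ∂`, the map `Ψ : a ↦ (c ↦ ∑ e, (c e * a e) • u e)` from `ℚ^E` to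
`Hom(K, ℚⁿ)` has kernel `W`, so `codim W = rank Ψ`. Every `Ψ a` sends `c₀` into the proper
subspace `U` spanned by the directions on the support of `c₀`, so the image of `Ψ` lies in the
proper subspace `{φ | φ c₀ ∈ U}` and `rank Ψ < n · dim K`. Connectedness makes the differences
of vertex indicators boundaries, so `rank ∂ ≥ #V - 1` and `dim K ≤ g`. -/

section LinearAlgebra

variable {𝕜 X K M : Type*} [Field 𝕜] [AddCommGroup X] [Module 𝕜 X] [AddCommGroup K] [Module 𝕜 K]
  [AddCommGroup M] [Module 𝕜 M]

theorem comap_applyₗ_ne_top {k : K} (hk : k ≠ 0) {U : Submodule 𝕜 M} (hU : U ≠ ⊤) :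
    U.comap (LinearMap.applyₗ k : (K →ₗ[𝕜] M) →ₗ[𝕜] M) ≠ ⊤ := by
  obtain ⟨m, hm⟩ := SetLike.exists_not_mem_of_ne_top U hU
  obtain ⟨f, hf⟩ := Module.Projective.exists_dual_eq_one 𝕜 hk
  intro htop
  have : f.smulRight m ∈ U.comap (LinearMap.applyₗ k) := htop ▸ Submodule.mem_top
  exact hm (by simpa [hf] using this)

theorem finrank_range_lt_of_forall_apply_mem [FiniteDimensional 𝕜 K] [FiniteDimensional 𝕜 M]
    (Ψ : X →ₗ[𝕜] K →ₗ[𝕜] M) {k : K} (hk : k ≠ 0) {U : Submodule 𝕜 M} (hU : U ≠ ⊤)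
    (hΨ : ∀ x, Ψ x k ∈ U) :
    Module.finrank 𝕜 (LinearMap.range Ψ) < Module.finrank 𝕜 K * Module.finrank 𝕜 M := by
  have hle : LinearMap.range Ψ ≤ U.comap (LinearMap.applyₗ k) := by
    rintro _ ⟨x, rfl⟩
    exact hΨ x
  calc Module.finrank 𝕜 (LinearMap.range Ψ)
      ≤ Module.finrank 𝕜 (U.comap (LinearMap.applyₗ k : (K →ₗ[𝕜] M) →ₗ[𝕜] M)) :=
        Submodule.finrank_mono hle
    _ < Module.finrank 𝕜 (K →ₗ[𝕜] M) := Submodule.finrank_lt (comap_applyₗ_ne_top hk hU)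
    _ = Module.finrank 𝕜 K * Module.finrank 𝕜 M := Module.finrank_linearMap 𝕜 𝕜 K M

end LinearAlgebra

section Boundary

variable {V E : Type*} [Fintype E] (s t : E → V)

theorem boundaryMap_single (e : E) :
    boundaryMap s t (Pi.single e 1) = Pi.single (t e) 1 - Pi.single (s e) 1 := by
  funext v
  simp [boundaryMap, Pi.single_apply, eq_comm]

theorem single_mem_ker_boundaryMap {e : E} (he : s e = t e) :
    Pi.single e 1 ∈ LinearMap.ker (boundaryMap s t) := by
  rw [LinearMap.mem_ker, boundaryMap_single, he, sub_self]

theorem single_sub_single_mem_range_boundaryMap {v w : V}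
    (h : Relation.ReflTransGen
      (fun x y => ∃ e, s e = x ∧ t e = y ∨ s e = y ∧ t e = x) v w) :
    (Pi.single w 1 - Pi.single v 1 : V → ℚ) ∈ LinearMap.range (boundaryMap s t) := by
  induction h with
  | refl => simp
  | @tail x y _ hxy ih =>
    obtain ⟨e, ⟨rfl, rfl⟩ | ⟨rfl, rfl⟩⟩ := hxy
    · rw [← sub_add_sub_cancel, ← boundaryMap_single]
      exact add_mem ⟨_, rfl⟩ ih
    · rw [← sub_sub_sub_cancel_left _ _ (Pi.single (t e) 1), ← boundaryMap_single]
      exact sub_mem ih ⟨_, rfl⟩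

theorem card_le_finrank_range_boundaryMap_add_one [Fintype V] (hconn : GraphConnected s t) :
    Fintype.card V ≤ Module.finrank ℚ (LinearMap.range (boundaryMap s t)) + 1 := by
  rcases isEmpty_or_nonempty V with _ | ⟨⟨v₀⟩⟩
  · simp
  set R := LinearMap.range (boundaryMap s t)
  have hsup : R ⊔ ℚ ∙ (Pi.single v₀ 1 : V → ℚ) = ⊤ := by
    refine eq_top_iff.2 fun f _ => ?_
    rw [← Finset.univ_sum_single f]
    refine Submodule.sum_mem _ fun v _ => ?_
    have hv : Pi.single v (f v) = f v • ((Pi.single v 1 - Pi.single v₀ 1) + Pi.single v₀ 1) := by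
      rw [sub_add_cancel, ← Pi.single_smul', smul_eq_mul, mul_one]
    rw [hv]
    exact Submodule.smul_mem _ _ <| add_mem
      (Submodule.mem_sup_left (single_sub_single_mem_range_boundaryMap s t (hconn v₀ v)))
      (Submodule.mem_sup_right (Submodule.mem_span_singleton_self _))
  have hfin := Submodule.finrank_add_le_finrank_add_finrank R (ℚ ∙ (Pi.single v₀ 1 : V → ℚ))
  rw [hsup, finrank_top, Module.finrank_fintype_fun_eq_card,
    finrank_span_singleton (by simp)] at hfin
  exact hfin

theorem finrank_ker_boundaryMap_add_card_le [Fintype V] (hconn : GraphConnected s t) :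
    Module.finrank ℚ (LinearMap.ker (boundaryMap s t)) + Fintype.card V ≤ Fintype.card E + 1 := by
  have := LinearMap.finrank_range_add_finrank_ker (boundaryMap s t)
  have := card_le_finrank_range_boundaryMap_add_one s t hconn
  rw [Module.finrank_fintype_fun_eq_card] at *
  omega

end Boundary

section CyclePairing

variable {V E : Type*} [Fintype E] {n : ℕ} (s t : E → V) (u : E → Fin n → ℚ)

theorem cyclePairing_mem_span_support (c a : E → ℚ) :
    cyclePairing u c a ∈ Submodule.span ℚ (u '' {e | c e ≠ 0}) := by
  refine Submodule.sum_mem _ fun e _ => ?_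
  by_cases he : c e = 0
  · simp [he]
  · exact Submodule.smul_mem _ _ (Submodule.subset_span ⟨e, he, rfl⟩)

noncomputable def cyclePairingMap :
    (E → ℚ) →ₗ[ℚ] LinearMap.ker (boundaryMap s t) →ₗ[ℚ] (Fin n → ℚ) :=
  (LinearMap.mk₂ ℚ (fun a c => cyclePairing u c a)
    (fun _ _ _ => map_add _ _ _) (fun _ _ _ => map_smul _ _ _)
    (fun a c c' => by simp [cyclePairing, add_mul, add_smul, Finset.sum_add_distrib])
    (fun r a c => by simp [cyclePairing, Finset.smul_sum, smul_smul, mul_assoc])).compl₂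
    (LinearMap.ker (boundaryMap s t)).subtype

theorem ker_cyclePairingMap : LinearMap.ker (cyclePairingMap s t u) = Wsub s t u := by
  ext a
  simp only [Wsub, Submodule.mem_iInf, LinearMap.mem_ker, LinearMap.ext_iff, Subtype.forall]
  rfl

theorem card_sub_finrank_Wsub :
    Fintype.card E - Module.finrank ℚ (Wsub s t u) =
      Module.finrank ℚ (LinearMap.range (cyclePairingMap s t u)) := by
  have := LinearMap.finrank_range_add_finrank_ker (cyclePairingMap s t u)
  rw [ker_cyclePairingMap, Module.finrank_fintype_fun_eq_card] at this
  omega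

end CyclePairing

theorem statement_3_general {V E : Type*} [Fintype V] [Fintype E]
    (s t : E → V) (hconn : GraphConnected s t) {n : ℕ} (hn : 1 ≤ n)
    (u : E → Fin n → ℚ) (g : ℕ) (hg : g + Fintype.card V = Fintype.card E + 1) :
    ((∃ c₀ ∈ LinearMap.ker (boundaryMap s t), c₀ ≠ 0 ∧
        Submodule.span ℚ (u '' {e | c₀ e ≠ 0}) ≠ ⊤) →
      Fintype.card E - Module.finrank ℚ (Wsub s t u) < n * g) ∧
    ((∃ e, s e = t e ∧ u e = 0) →
      Fintype.card E - Module.finrank ℚ (Wsub s t u) < n * g) := by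
  have nonspanning_cycle : (∃ c₀ ∈ LinearMap.ker (boundaryMap s t), c₀ ≠ 0 ∧
        Submodule.span ℚ (u '' {e | c₀ e ≠ 0}) ≠ ⊤) →
      Fintype.card E - Module.finrank ℚ (Wsub s t u) < n * g := by
    rintro ⟨c₀, hc₀, hc₀_ne, hspan⟩
    have hrank := finrank_range_lt_of_forall_apply_mem (cyclePairingMap s t u)
      (k := ⟨c₀, hc₀⟩) (by simpa using hc₀_ne) hspan (cyclePairing_mem_span_support u c₀)
    have hK := finrank_ker_boundaryMap_add_card_le s t hconn
    rw [Module.finrank_fin_fun] at hrank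
    rw [card_sub_finrank_Wsub]
    calc _ < Module.finrank ℚ (LinearMap.ker (boundaryMap s t)) * n := hrank
      _ ≤ g * n := Nat.mul_le_mul_right n (by omega)
      _ = n * g := Nat.mul_comm g n
  refine ⟨nonspanning_cycle, fun ⟨e, hloop, hue⟩ => nonspanning_cycle ?_⟩
  have : Nontrivial (Fin n → ℚ) := by
    have : Nonempty (Fin n) := Fin.pos_iff_nonempty.1 hn
    infer_instance
  refine ⟨Pi.single e 1, single_mem_ker_boundaryMap s t hloop, by simp, ?_⟩
  simp [Pi.single_apply, hue]

/-- Lemma 2.6: non-spanning loops give superabundance.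
If some nonzero rational cycle `c₀` has all its edge directions contained in a proper subspace
of `ℚⁿ`, then `codim W < n·g`; in particular this holds if some edge is self-adjacent with
direction `0`. Here `g = #E − #V + 1` is the first Betti number. -/
theorem statement_3 {V E : Type*} [Fintype V] [Fintype E] [Nonempty V]
    (s t : E → V) (hconn : GraphConnected s t) {n : ℕ} (hn : 1 ≤ n)
    (u : E → Fin n → ℚ) (g : ℕ) (hg : g + Fintype.card V = Fintype.card E + 1) :
    ((∃ c₀ ∈ LinearMap.ker (boundaryMap s t), c₀ ≠ 0 ∧
        Submodule.span ℚ (u '' {e | c₀ e ≠ 0}) ≠ ⊤) →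
      Fintype.card E - Module.finrank ℚ (Wsub s t u) < n * g) ∧
    ((∃ e, s e = t e ∧ u e = 0) →
      Fintype.card E - Module.finrank ℚ (Wsub s t u) < n * g) :=
  statement_3_general s t hconn hn u g hg
end

section
/- Fix n ≥ 1, a genus g ∈ ℕ, a number of markings m ∈ ℕ, and a degree, i.e. a function Δ : Fin e∞ → ℤ^n \ {0}. Then there are only finitely many isomorphism classes of types of marked parametrized tropical curves in ℚ^n of genus g with m vertex markings and degree Δ. -/
open scoped Classical

/-- The combinatorial and metric data of a marked parametrized tropical curve in `ℚⁿ` with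
`m` vertex markings and `einf` unbounded edges, minus the positions/lengths `(h, ℓ)`:
a finite multigraph with vertices `V`, compact edges `E` (with source/target `s, t`),
unbounded edges `Einf` attached via `bd`, weights `w`, integral directions `u`,
vertex genera `gV`, vertex markings `μ` and labeling `ε` of the unbounded edges. -/
structure TropCurveType (n m einf : ℕ) where
  V : Type
  E : Type
  Einf : Type
  [fintV : Fintype V]
  [fintE : Fintype E]
  [fintEinf : Fintype Einf]
  [nonemptyV : Nonempty V]
  s : E → V
  t : E → V
  bd : Einf → V
  w : E ⊕ Einf → ℕ
  u : E ⊕ Einf → (Fin n → ℤ)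
  gV : V → ℕ
  μ : Fin m → V
  ε : Fin einf ≃ Einf

attribute [instance] TropCurveType.fintV TropCurveType.fintE TropCurveType.fintEinf
  TropCurveType.nonemptyV

namespace TropCurveType

variable {n m einf : ℕ} (Γ : TropCurveType n m einf)

/-- The valence of a vertex: endpoints of compact edges (self-adjacent edges counted twice)
plus attached unbounded edges. -/
noncomputable def valence (v : Γ.V) : ℕ :=
  (Finset.univ.filter fun e => Γ.s e = v).card +
    (Finset.univ.filter fun e => Γ.t e = v).card +
    (Finset.univ.filter fun e => Γ.bd e = v).card

/-- Connectedness of the underlying undirected graph (on compact edges). -/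
def Connected : Prop :=
  ∀ v w : Γ.V, Relation.ReflTransGen
    (fun x y => ∃ e, Γ.s e = x ∧ Γ.t e = y ∨ Γ.s e = y ∧ Γ.t e = x) v w

/-- The balancing condition at every vertex. -/
def Balanced : Prop :=
  ∀ v : Γ.V,
    ((∑ e : Γ.E, if Γ.s e = v then (Γ.w (Sum.inl e) : ℤ) • Γ.u (Sum.inl e) else 0)
      - (∑ e : Γ.E, if Γ.t e = v then (Γ.w (Sum.inl e) : ℤ) • Γ.u (Sum.inl e) else 0))
      + (∑ e : Γ.Einf, if Γ.bd e = v then (Γ.w (Sum.inr e) : ℤ) • Γ.u (Sum.inr e) else 0) = 0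

/-- The type is realizable: there are vertex positions `h` and positive edge lengths `ℓ`
with `h (t e) − h (s e) = (ℓ e)·(w e) • (u e)` for every compact edge `e`. -/
def Realizable : Prop :=
  ∃ (h : Γ.V → Fin n → ℚ) (ℓ : Γ.E → ℚ),
    (∀ e, 0 < ℓ e) ∧
    ∀ e, h (Γ.t e) - h (Γ.s e)
      = (ℓ e * (Γ.w (Sum.inl e) : ℚ)) • fun i => ((Γ.u (Sum.inl e) i : ℚ))

/-- `Γ` is the type of a marked parametrized tropical curve of genus `g` and degree `Δ`:
connected; unbounded edges have weight `≥ 1`; `u e = 0 ↔ w e = 0`; directions of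
non-contracted edges are primitive; `#E − #V + 1 + ∑ gV = g`; balanced; all valences `≥ 2`;
genus-zero bivalent vertices are marked; the degree is `Δ`; and it is realizable by some
positions and lengths. -/
def IsTypeOfCurve (g : ℕ) (Δ : Fin einf → Fin n → ℤ) : Prop :=
  Γ.Connected ∧
  (∀ e : Γ.Einf, 1 ≤ Γ.w (Sum.inr e)) ∧
  (∀ e, Γ.u e = 0 ↔ Γ.w e = 0) ∧
  (∀ e, Γ.w e ≠ 0 → Finset.univ.gcd (Γ.u e) = 1) ∧
  (Fintype.card Γ.E + 1 + ∑ v : Γ.V, Γ.gV v = g + Fintype.card Γ.V) ∧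
  Γ.Balanced ∧
  (∀ v : Γ.V, 2 ≤ Γ.valence v) ∧
  (∀ v : Γ.V, Γ.valence v = 2 → Γ.gV v = 0 → ∃ i, Γ.μ i = v) ∧
  (∀ j : Fin einf, (Γ.w (Sum.inr (Γ.ε j)) : ℤ) • Γ.u (Sum.inr (Γ.ε j)) = Δ j) ∧
  Γ.Realizable

/-- An isomorphism of types: bijections of vertices, compact edges and unbounded edges
commuting with the attachment map, markings and labeling, preserving weights and vertex
genera, and matching each compact edge either preserving `(s, t)` and `u`, or swapping
`s` with `t` and negating `u`. -/
structure Iso (Γ Γ' : TropCurveType n m einf) where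
  eV : Γ.V ≃ Γ'.V
  eE : Γ.E ≃ Γ'.E
  eI : Γ.Einf ≃ Γ'.Einf
  bd_comm : ∀ e, Γ'.bd (eI e) = eV (Γ.bd e)
  μ_comm : ∀ i, Γ'.μ i = eV (Γ.μ i)
  ε_comm : ∀ j, Γ'.ε j = eI (Γ.ε j)
  w_E : ∀ e, Γ'.w (Sum.inl (eE e)) = Γ.w (Sum.inl e)
  w_Einf : ∀ e, Γ'.w (Sum.inr (eI e)) = Γ.w (Sum.inr e)
  u_Einf : ∀ e, Γ'.u (Sum.inr (eI e)) = Γ.u (Sum.inr e)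
  gV_comm : ∀ v, Γ'.gV (eV v) = Γ.gV v
  edge_compat : ∀ e,
    (Γ'.s (eE e) = eV (Γ.s e) ∧ Γ'.t (eE e) = eV (Γ.t e) ∧
      Γ'.u (Sum.inl (eE e)) = Γ.u (Sum.inl e)) ∨
    (Γ'.s (eE e) = eV (Γ.t e) ∧ Γ'.t (eE e) = eV (Γ.s e) ∧
      Γ'.u (Sum.inl (eE e)) = - Γ.u (Sum.inl e))

end TropCurveType


namespace TropCurveType

lemma scalar_balance {n m einf : ℕ} (Γ : TropCurveType n m einf) (hbal : Γ.Balanced)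
    (i : Fin n) (v : Γ.V) :
    ((∑ e : Γ.E, if Γ.s e = v then (Γ.w (Sum.inl e) : ℤ) * Γ.u (Sum.inl e) i else 0)
      - (∑ e : Γ.E, if Γ.t e = v then (Γ.w (Sum.inl e) : ℤ) * Γ.u (Sum.inl e) i else 0))
      + (∑ f : Γ.Einf, if Γ.bd f = v then (Γ.w (Sum.inr f) : ℤ) * Γ.u (Sum.inr f) i else 0)
      = 0 := by
  have h := congrFun (hbal v) i
  simpa [Finset.sum_apply, apply_ite (fun (g : Fin n → ℤ) => g i), Pi.smul_apply,
    smul_eq_mul] using h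

lemma edge_bound {n m einf : ℕ} (Γ : TropCurveType n m einf) (Δ : Fin einf → Fin n → ℤ)
    (hbal : Γ.Balanced)
    (hwu : ∀ e, Γ.u e = 0 ↔ Γ.w e = 0)
    (hdeg : ∀ j, (Γ.w (Sum.inr (Γ.ε j)) : ℤ) • Γ.u (Sum.inr (Γ.ε j)) = Δ j)
    (hreal : Γ.Realizable) (e₀ : Γ.E) (i : Fin n) :
    (Γ.w (Sum.inl e₀) : ℤ) * (Γ.u (Sum.inl e₀) i).natAbs
      ≤ ∑ j : Fin einf, ((Δ j i).natAbs : ℤ) := by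
  have hsumnn : (0:ℤ) ≤ ∑ j : Fin einf, ((Δ j i).natAbs : ℤ) :=
    Finset.sum_nonneg fun j _ => by positivity
  by_cases hu0 : Γ.u (Sum.inl e₀) i = 0
  · simpa [hu0] using hsumnn
  have hw0 : Γ.w (Sum.inl e₀) ≠ 0 := by
    intro h0
    exact hu0 (by rw [(hwu _).2 h0]; rfl)
  obtain ⟨h, ℓ, hℓ, hrel⟩ := hreal
  have hrel' : ∀ e : Γ.E, h (Γ.t e) i - h (Γ.s e) i
      = ℓ e * ((Γ.w (Sum.inl e) : ℚ) * (Γ.u (Sum.inl e) i : ℚ)) := by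
    intro e
    have := congrFun (hrel e) i
    simpa [Pi.sub_apply, Pi.smul_apply, smul_eq_mul, mul_assoc] using this
  set c : ℚ := min (h (Γ.s e₀) i) (h (Γ.t e₀) i) with hc
  set F : Γ.E ⊕ Γ.Einf → ℤ := fun x => (Γ.w x : ℤ) * Γ.u x i with hF
  -- summed balancing over the sublevel set
  have hsum : ((∑ e : Γ.E, if h (Γ.s e) i ≤ c then F (Sum.inl e) else 0)
      - (∑ e : Γ.E, if h (Γ.t e) i ≤ c then F (Sum.inl e) else 0))
      + (∑ f : Γ.Einf, if h (Γ.bd f) i ≤ c then F (Sum.inr f) else 0) = 0 := by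
    have h0 : ∑ v ∈ Finset.univ.filter (fun v => h v i ≤ c),
        (((∑ e : Γ.E, if Γ.s e = v then F (Sum.inl e) else 0)
          - (∑ e : Γ.E, if Γ.t e = v then F (Sum.inl e) else 0))
          + (∑ f : Γ.Einf, if Γ.bd f = v then F (Sum.inr f) else 0)) = 0 := by
      refine Finset.sum_eq_zero fun v _ => ?_
      exact Γ.scalar_balance hbal i v
    rw [Finset.sum_add_distrib, Finset.sum_sub_distrib] at h0
    have swap : ∀ {α : Type} [inst : Fintype α] (p : α → Γ.V) (f : α → ℤ),
        (∑ v ∈ Finset.univ.filter (fun v => h v i ≤ c), ∑ e : α, if p e = v then f e else 0)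
          = ∑ e : α, if h (p e) i ≤ c then f e else 0 := by
      intro α _ p f
      rw [Finset.sum_comm]
      refine Finset.sum_congr rfl fun e _ => ?_
      rw [Finset.sum_ite_eq]
      simp
    rw [swap Γ.s (fun e => F (Sum.inl e)), swap Γ.t (fun e => F (Sum.inl e)),
      swap Γ.bd (fun f => F (Sum.inr f))] at h0
    exact h0
  -- each compact-edge term is nonnegative
  set T : Γ.E → ℤ := fun e =>
    (if h (Γ.s e) i ≤ c then F (Sum.inl e) else 0)
      - (if h (Γ.t e) i ≤ c then F (Sum.inl e) else 0) with hT
  have hTnn : ∀ e, 0 ≤ T e := by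
    intro e
    by_cases hs : h (Γ.s e) i ≤ c <;> by_cases ht : h (Γ.t e) i ≤ c <;>
      simp only [hT, hs, ht, if_pos, if_neg, sub_zero, zero_sub, sub_self, le_refl,
        if_true, if_false]
    · -- s in, t out : F ≥ 0
      have hd : 0 < h (Γ.t e) i - h (Γ.s e) i := by
        have := not_le.mp ht
        linarith
      rw [hrel' e] at hd
      have hq : 0 < (Γ.w (Sum.inl e) : ℚ) * (Γ.u (Sum.inl e) i : ℚ) := by
        nlinarith [hℓ e]
      have : (0:ℚ) < ((Γ.w (Sum.inl e) : ℤ) * Γ.u (Sum.inl e) i : ℤ) := by push_cast; linarith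
      exact_mod_cast this.le
    · -- s out, t in : F ≤ 0
      have hd : h (Γ.t e) i - h (Γ.s e) i < 0 := by
        have := not_le.mp hs
        linarith
      rw [hrel' e] at hd
      have hq : (Γ.w (Sum.inl e) : ℚ) * (Γ.u (Sum.inl e) i : ℚ) < 0 := by
        nlinarith [hℓ e]
      have : (((Γ.w (Sum.inl e) : ℤ) * Γ.u (Sum.inl e) i : ℤ) : ℚ) < 0 := by push_cast; linarith
      have h2 : ((Γ.w (Sum.inl e) : ℤ) * Γ.u (Sum.inl e) i : ℤ) < 0 := by exact_mod_cast this
      simp only [hF]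
      omega
  -- the term at e₀ is w₀ * |u₀ i|
  have hwQ : (0:ℚ) < (Γ.w (Sum.inl e₀) : ℚ) := by
    exact_mod_cast Nat.pos_of_ne_zero hw0
  have hTe₀ : (Γ.w (Sum.inl e₀) : ℤ) * ((Γ.u (Sum.inl e₀) i).natAbs : ℤ) ≤ T e₀ := by
    rcases lt_or_gt_of_ne hu0 with hneg | hpos
    · -- u₀ i < 0 : h t₀ < h s₀, c = h t₀ i
      have huQ : ((Γ.u (Sum.inl e₀) i : ℤ) : ℚ) < 0 := by exact_mod_cast hneg
      have hlt : h (Γ.t e₀) i < h (Γ.s e₀) i := by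
        have h1 : ℓ e₀ * ((Γ.w (Sum.inl e₀) : ℚ) * (Γ.u (Sum.inl e₀) i : ℚ)) < 0 :=
          mul_neg_of_pos_of_neg (hℓ e₀) (mul_neg_of_pos_of_neg hwQ huQ)
        linarith [hrel' e₀]
      have hceq : c = h (Γ.t e₀) i := by rw [hc, min_eq_right hlt.le]
      have hs : ¬ (h (Γ.s e₀) i ≤ c) := by rw [hceq]; exact not_le.mpr hlt
      have ht : h (Γ.t e₀) i ≤ c := by rw [hceq]
      simp only [hT, hs, ht, if_true, if_false, zero_sub, hF]
      have : ((Γ.u (Sum.inl e₀) i).natAbs : ℤ) = - Γ.u (Sum.inl e₀) i := by omega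
      rw [this]
      ring_nf
      exact le_refl _
    · -- u₀ i > 0 : h s₀ < h t₀, c = h s₀ i
      have huQ : (0:ℚ) < ((Γ.u (Sum.inl e₀) i : ℤ) : ℚ) := by exact_mod_cast hpos
      have hlt : h (Γ.s e₀) i < h (Γ.t e₀) i := by
        have h1 : 0 < ℓ e₀ * ((Γ.w (Sum.inl e₀) : ℚ) * (Γ.u (Sum.inl e₀) i : ℚ)) :=
          mul_pos (hℓ e₀) (mul_pos hwQ huQ)
        linarith [hrel' e₀]
      have hceq : c = h (Γ.s e₀) i := by rw [hc, min_eq_left hlt.le]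
      have hs : h (Γ.s e₀) i ≤ c := by rw [hceq]
      have ht : ¬ (h (Γ.t e₀) i ≤ c) := by rw [hceq]; exact not_le.mpr hlt
      simp only [hT, hs, ht, if_true, if_false, sub_zero, hF]
      have : ((Γ.u (Sum.inl e₀) i).natAbs : ℤ) = Γ.u (Sum.inl e₀) i := by omega
      rw [this]
  -- conclude
  have hsingle : T e₀ ≤ ∑ e : Γ.E, T e :=
    Finset.single_le_sum (fun e _ => hTnn e) (Finset.mem_univ e₀)
  have hTsum : ∑ e : Γ.E, T e
      = - (∑ f : Γ.Einf, if h (Γ.bd f) i ≤ c then F (Sum.inr f) else 0) := by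
    simp only [hT]
    rw [Finset.sum_sub_distrib]
    linarith [hsum]
  have hCle : - (∑ f : Γ.Einf, if h (Γ.bd f) i ≤ c then F (Sum.inr f) else 0)
      ≤ ∑ f : Γ.Einf, ((F (Sum.inr f)).natAbs : ℤ) := by
    rw [← Finset.sum_neg_distrib]
    refine Finset.sum_le_sum fun f _ => ?_
    rw [← Int.abs_eq_natAbs]
    by_cases hb : h (Γ.bd f) i ≤ c
    · simpa [hb] using neg_le_abs (F (Sum.inr f))
    · simpa [hb] using abs_nonneg (F (Sum.inr f))
  have hFd : ∀ j : Fin einf, F (Sum.inr (Γ.ε j)) = Δ j i := by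
    intro j
    have := congrFun (hdeg j) i
    simpa [Pi.smul_apply, smul_eq_mul, hF] using this
  have hreidx : ∑ f : Γ.Einf, ((F (Sum.inr f)).natAbs : ℤ)
      = ∑ j : Fin einf, ((Δ j i).natAbs : ℤ) := by
    rw [← Equiv.sum_comp Γ.ε (fun f => ((F (Sum.inr f)).natAbs : ℤ))]
    exact Finset.sum_congr rfl fun j _ => by rw [hFd j]
  calc (Γ.w (Sum.inl e₀) : ℤ) * ((Γ.u (Sum.inl e₀) i).natAbs : ℤ) ≤ T e₀ := hTe₀
    _ ≤ ∑ e : Γ.E, T e := hsingle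
    _ = - (∑ f : Γ.Einf, if h (Γ.bd f) i ≤ c then F (Sum.inr f) else 0) := hTsum
    _ ≤ ∑ f : Γ.Einf, ((F (Sum.inr f)).natAbs : ℤ) := hCle
    _ = ∑ j : Fin einf, ((Δ j i).natAbs : ℤ) := hreidx

lemma counting {n m einf : ℕ} (Γ : TropCurveType n m einf)
    (hval : ∀ v, 2 ≤ Γ.valence v)
    (hmark : ∀ v : Γ.V, Γ.valence v = 2 → Γ.gV v = 0 → ∃ i, Γ.μ i = v) :
    3 * Fintype.card Γ.V ≤ 2 * Fintype.card Γ.E + einf + m + ∑ v : Γ.V, Γ.gV v := by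
  classical
  have hfib : ∀ (α : Type) [inst : Fintype α] (p : α → Γ.V),
      ∑ v : Γ.V, (Finset.univ.filter fun e => p e = v).card = Fintype.card α := by
    intro α _ p
    rw [← Finset.card_eq_sum_card_fiberwise (fun x _ => Finset.mem_univ (p x))]
    rfl
  have hval_sum : ∑ v : Γ.V, Γ.valence v = 2 * Fintype.card Γ.E + einf := by
    unfold valence
    rw [Finset.sum_add_distrib, Finset.sum_add_distrib, hfib Γ.E Γ.s, hfib Γ.E Γ.t,
      hfib Γ.Einf Γ.bd]
    have : Fintype.card Γ.Einf = einf := by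
      rw [← Fintype.card_congr Γ.ε, Fintype.card_fin]
    omega
  set bad : Finset Γ.V :=
    Finset.univ.filter (fun v => (Γ.valence v = 2 ∧ Γ.gV v = 0) ∨ 0 < Γ.gV v) with hbad
  have hkey : ∀ v : Γ.V, 3 ≤ Γ.valence v + (if v ∈ bad then 1 else 0) := by
    intro v
    by_cases hv : v ∈ bad
    · have := hval v
      simp only [hv, if_true]
      omega
    · have h2 : Γ.valence v ≠ 2 := by
        intro h2
        apply hv
        rw [hbad, Finset.mem_filter]
        refine ⟨Finset.mem_univ _, ?_⟩
        by_cases hg : Γ.gV v = 0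
        · exact Or.inl ⟨h2, hg⟩
        · exact Or.inr (Nat.pos_of_ne_zero hg)
      have := hval v
      simp only [hv, if_false]
      omega
  have h3 : 3 * Fintype.card Γ.V ≤ (2 * Fintype.card Γ.E + einf) + bad.card := by
    calc 3 * Fintype.card Γ.V = ∑ _v : Γ.V, 3 := by
          rw [Finset.sum_const, Finset.card_univ, smul_eq_mul, mul_comm]
      _ ≤ ∑ v : Γ.V, (Γ.valence v + (if v ∈ bad then 1 else 0)) :=
          Finset.sum_le_sum fun v _ => hkey v
      _ = (2 * Fintype.card Γ.E + einf) + bad.card := by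
          rw [Finset.sum_add_distrib, hval_sum, Finset.sum_ite_mem,
            Finset.univ_inter, Finset.sum_const, smul_eq_mul, mul_one]
  have hbadcard : bad.card ≤ m + ∑ v : Γ.V, Γ.gV v := by
    have hsub : bad ⊆ (Finset.univ.image Γ.μ) ∪ (Finset.univ.filter fun v => 0 < Γ.gV v) := by
      intro v hv
      rw [hbad, Finset.mem_filter] at hv
      rcases hv.2 with ⟨h2, h0⟩ | hg
      · obtain ⟨i, hi⟩ := hmark v h2 h0
        exact Finset.mem_union_left _ (Finset.mem_image.mpr ⟨i, Finset.mem_univ i, hi⟩)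
      · exact Finset.mem_union_right _ (Finset.mem_filter.mpr ⟨Finset.mem_univ _, hg⟩)
    calc bad.card ≤ _ := Finset.card_le_card hsub
      _ ≤ (Finset.univ.image Γ.μ).card
          + (Finset.univ.filter fun v => 0 < Γ.gV v).card := Finset.card_union_le _ _
      _ ≤ m + ∑ v : Γ.V, Γ.gV v := by
          gcongr
          · calc (Finset.univ.image Γ.μ).card ≤ (Finset.univ : Finset (Fin m)).card :=
                Finset.card_image_le
              _ = m := by simp
          · calc (Finset.univ.filter fun v => 0 < Γ.gV v).card
                = ∑ _v ∈ (Finset.univ.filter fun v => 0 < Γ.gV v), 1 := by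
                  rw [Finset.sum_const, smul_eq_mul, mul_one]
              _ ≤ ∑ v ∈ (Finset.univ.filter fun v => 0 < Γ.gV v), Γ.gV v :=
                  Finset.sum_le_sum fun v hv => (Finset.mem_filter.mp hv).2
              _ ≤ ∑ v : Γ.V, Γ.gV v :=
                  Finset.sum_le_sum_of_subset (Finset.filter_subset _ _)
  omega


end TropCurveType

/-- Encoded, bounded data for a normal form of a tropical curve type:
source, target, boundary, weights, directions, vertex genera, markings. -/
def TropData (n m einf W Gb a b : ℕ) : Type :=
  (Fin b → Fin a) × (Fin b → Fin a) × (Fin einf → Fin a) ×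
    (Fin b ⊕ Fin einf → Fin (W+1)) × (Fin b ⊕ Fin einf → Fin n → Fin (2*W+1)) ×
    (Fin a → Fin (Gb+1)) × (Fin m → Fin a)

instance TropData.instFintype {n m einf W Gb a b : ℕ} :
    Fintype (TropData n m einf W Gb a b) := by
  unfold TropData
  infer_instance

/-- Decode bounded data into a curve type. -/
def TropData.toCurve {n m einf W Gb b : ℕ} {a' : ℕ}
    (d : TropData n m einf W Gb (a'+1) b) : TropCurveType n m einf where
  V := Fin (a'+1)
  E := Fin b
  Einf := Fin einf
  s := d.1
  t := d.2.1
  bd := d.2.2.1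
  w x := (d.2.2.2.1 x : ℕ)
  u x i := ((d.2.2.2.2.1 x i : ℕ) : ℤ) - W
  gV v := (d.2.2.2.2.2.1 v : ℕ)
  μ := d.2.2.2.2.2.2
  ε := Equiv.refl _

/-- Lemma 2.3 of the paper, after Nishinou–Siebert Proposition 2.1.
For fixed `n ≥ 1`, genus `g`, number of markings `m` and degree
`Δ : Fin einf → ℤⁿ \ {0}`, there are only finitely many isomorphism classes of types of
marked parametrized tropical curves in `ℚⁿ` of genus `g` with `m` vertex markings and
degree `Δ`. -/
theorem statement_7 {n : ℕ} (hn : 1 ≤ n) (g m einf : ℕ)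
    (Δ : Fin einf → Fin n → ℤ) (hΔ : ∀ j, Δ j ≠ 0) :
    ∃ l : List (TropCurveType n m einf),
      ∀ Γ : TropCurveType n m einf, Γ.IsTypeOfCurve g Δ →
        ∃ Γ' ∈ l, Nonempty (TropCurveType.Iso Γ Γ') := by
  classical
  set W : ℕ := ∑ j : Fin einf, ∑ i : Fin n, (Δ j i).natAbs with hWdef
  set A : ℕ := 2*g + m + einf with hAdef
  set Bd : ℕ := 3*g + m + einf with hBddef
  set Gb : ℕ := g + A with hGbdef
  refine ⟨(List.range (A+1)).flatMap fun a' => (List.range (Bd+1)).flatMap fun b =>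
    (Finset.univ : Finset (TropData n m einf W Gb (a'+1) b)).toList.map
      TropData.toCurve, ?_⟩
  intro Γ hΓ
  obtain ⟨hconn, hw1, hwu, hprim, hgen, hbal, hval, hmark, hdeg, hreal⟩ := hΓ
  -- bounds on sums of |Δ|
  have hWsum : ∀ i : Fin n, ∑ j : Fin einf, (Δ j i).natAbs ≤ W := by
    intro i
    refine Finset.sum_le_sum fun j _ => ?_
    exact Finset.single_le_sum (f := fun i => (Δ j i).natAbs)
      (fun _ _ => Nat.zero_le _) (Finset.mem_univ i)
  -- bounds on weights and directions
  have hbd : ∀ x : Γ.E ⊕ Γ.Einf, Γ.w x ≤ W ∧ ∀ i, (Γ.u x i).natAbs ≤ W := by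
    intro x
    match x with
    | Sum.inl e =>
      have hkey : ∀ i, Γ.w (Sum.inl e) * (Γ.u (Sum.inl e) i).natAbs ≤ W := by
        intro i
        have h1 := Γ.edge_bound Δ hbal hwu hdeg hreal e i
        have h2 : (∑ j : Fin einf, ((Δ j i).natAbs : ℤ))
            = ((∑ j : Fin einf, (Δ j i).natAbs : ℕ) : ℤ) := by push_cast; ring
        rw [h2] at h1
        have h3 : (Γ.w (Sum.inl e) * (Γ.u (Sum.inl e) i).natAbs : ℕ)
            ≤ ∑ j : Fin einf, (Δ j i).natAbs := by exact_mod_cast h1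
        exact le_trans h3 (hWsum i)
      by_cases hw : Γ.w (Sum.inl e) = 0
      · have hu : Γ.u (Sum.inl e) = 0 := (hwu _).mpr hw
        constructor
        · omega
        · intro i
          rw [hu]
          simp
      · constructor
        · have hu : Γ.u (Sum.inl e) ≠ 0 := fun h0 => hw ((hwu _).mp h0)
          have : ∃ i, Γ.u (Sum.inl e) i ≠ 0 := by
            by_contra hcon
            push_neg at hcon
            exact hu (funext fun i => hcon i)
          obtain ⟨i, hi⟩ := this
          have := hkey i
          have : 1 ≤ (Γ.u (Sum.inl e) i).natAbs := by omega
          calc Γ.w (Sum.inl e) ≤ Γ.w (Sum.inl e) * (Γ.u (Sum.inl e) i).natAbs :=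
              Nat.le_mul_of_pos_right _ (by omega)
            _ ≤ W := hkey i
        · intro i
          have := hkey i
          have hw' : 1 ≤ Γ.w (Sum.inl e) := Nat.one_le_iff_ne_zero.mpr hw
          calc (Γ.u (Sum.inl e) i).natAbs
              ≤ Γ.w (Sum.inl e) * (Γ.u (Sum.inl e) i).natAbs :=
                Nat.le_mul_of_pos_left _ (by omega)
            _ ≤ W := hkey i
    | Sum.inr f =>
      set j : Fin einf := Γ.ε.symm f with hj
      have hfj : Γ.ε j = f := Γ.ε.apply_symm_apply f
      have hD : ∀ i, (Γ.w (Sum.inr f) : ℤ) * Γ.u (Sum.inr f) i = Δ j i := by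
        intro i
        have := congrFun (hdeg j) i
        rw [hfj] at this
        simpa [Pi.smul_apply, smul_eq_mul] using this
      have hDabs : ∀ i, Γ.w (Sum.inr f) * (Γ.u (Sum.inr f) i).natAbs = (Δ j i).natAbs := by
        intro i
        rw [← hD i, Int.natAbs_mul, Int.natAbs_natCast]
      have hwpos : 1 ≤ Γ.w (Sum.inr f) := hw1 f
      constructor
      · have : ∃ i, Δ j i ≠ 0 := by
          by_contra hcon
          push_neg at hcon
          exact hΔ j (funext fun i => hcon i)
        obtain ⟨i, hi⟩ := this
        have h1 := hDabs i
        have h2 : (Δ j i).natAbs ≤ W :=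
          le_trans (Finset.single_le_sum (f := fun j => (Δ j i).natAbs)
            (fun _ _ => Nat.zero_le _) (Finset.mem_univ j)) (hWsum i)
        have h3 : 1 ≤ (Γ.u (Sum.inr f) i).natAbs := by
          refine Nat.one_le_iff_ne_zero.mpr fun h0 => hi ?_
          have h4 := hDabs i
          rw [h0, Nat.mul_zero] at h4
          exact Int.natAbs_eq_zero.mp h4.symm
        calc Γ.w (Sum.inr f) ≤ Γ.w (Sum.inr f) * (Γ.u (Sum.inr f) i).natAbs :=
            Nat.le_mul_of_pos_right _ (by omega)
          _ = (Δ j i).natAbs := hDabs i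
          _ ≤ W := h2
      · intro i
        have h2 : (Δ j i).natAbs ≤ W :=
          le_trans (Finset.single_le_sum (f := fun j => (Δ j i).natAbs)
            (fun _ _ => Nat.zero_le _) (Finset.mem_univ j)) (hWsum i)
        calc (Γ.u (Sum.inr f) i).natAbs
            ≤ Γ.w (Sum.inr f) * (Γ.u (Sum.inr f) i).natAbs :=
              Nat.le_mul_of_pos_left _ (by omega)
          _ = (Δ j i).natAbs := hDabs i
          _ ≤ W := h2
  -- cardinality bounds
  have hcount := Γ.counting hval hmark
  have ha1 : 1 ≤ Fintype.card Γ.V := Fintype.card_pos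
  have haA : Fintype.card Γ.V ≤ A := by omega
  have hbB : Fintype.card Γ.E ≤ Bd := by omega
  have hGsum : ∑ v : Γ.V, Γ.gV v ≤ Gb := by omega
  have hgV : ∀ v : Γ.V, Γ.gV v ≤ Gb := fun v =>
    le_trans (Finset.single_le_sum (f := Γ.gV) (fun _ _ => Nat.zero_le _)
      (Finset.mem_univ v)) hGsum
  set a := Fintype.card Γ.V with hadef
  set b := Fintype.card Γ.E with hbdef
  have hacard : Fintype.card Γ.V = (a - 1) + 1 := by omega
  let eV : Γ.V ≃ Fin ((a-1)+1) := Fintype.equivFinOfCardEq hacard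
  let eE : Γ.E ≃ Fin b := Fintype.equivFin Γ.E
  let eI : Γ.Einf ≃ Fin einf := Γ.ε.symm
  let tr : Fin b ⊕ Fin einf → Γ.E ⊕ Γ.Einf := Sum.map eE.symm eI.symm
  have hudec : ∀ (x : Fin b ⊕ Fin einf) (i : Fin n),
      ((((Γ.u (tr x) i + W).toNat : ℕ) : ℤ) - W) = Γ.u (tr x) i := by
    intro x i
    have := (hbd (tr x)).2 i
    omega
  let d : TropData n m einf W Gb ((a-1)+1) b :=
    ⟨fun e => eV (Γ.s (eE.symm e)),
      fun e => eV (Γ.t (eE.symm e)),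
      fun f => eV (Γ.bd (eI.symm f)),
      fun x => ⟨Γ.w (tr x), Nat.lt_succ_of_le (hbd (tr x)).1⟩,
      fun x i => ⟨(Γ.u (tr x) i + W).toNat, by
        have := (hbd (tr x)).2 i; omega⟩,
      fun v => ⟨Γ.gV (eV.symm v), Nat.lt_succ_of_le (hgV _)⟩,
      fun i => eV (Γ.μ i)⟩
  refine ⟨d.toCurve, ?_, ?_⟩
  · simp only [List.mem_flatMap, List.mem_map, List.mem_range, Finset.mem_toList]
    exact ⟨a - 1, by omega, b, by omega, d, Finset.mem_univ d, rfl⟩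
  · refine ⟨⟨eV, eE, eI, ?_, ?_, ?_, ?_, ?_, ?_, ?_, ?_⟩⟩
    · intro f
      show eV (Γ.bd (eI.symm (eI f))) = eV (Γ.bd f)
      rw [Equiv.symm_apply_apply]
    · intro i
      rfl
    · intro j
      show j = eI (Γ.ε j)
      simp only [eI, Equiv.symm_apply_apply]
    · intro e
      show Γ.w (tr (Sum.inl (eE e))) = Γ.w (Sum.inl e)
      simp only [tr, Sum.map_inl, Equiv.symm_apply_apply]
    · intro f
      show Γ.w (tr (Sum.inr (eI f))) = Γ.w (Sum.inr f)
      simp only [tr, Sum.map_inr, Equiv.symm_apply_apply]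
    · intro f
      funext i
      show (((Γ.u (tr (Sum.inr (eI f))) i + W).toNat : ℕ) : ℤ) - W = Γ.u (Sum.inr f) i
      rw [hudec]
      simp only [tr, Sum.map_inr, Equiv.symm_apply_apply]
    · intro v
      show Γ.gV (eV.symm (eV v)) = Γ.gV v
      rw [Equiv.symm_apply_apply]
    · intro e
      left
      refine ⟨?_, ?_, ?_⟩
      · show eV (Γ.s (eE.symm (eE e))) = eV (Γ.s e)
        rw [Equiv.symm_apply_apply]
      · show eV (Γ.t (eE.symm (eE e))) = eV (Γ.t e)
        rw [Equiv.symm_apply_apply]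
      · funext i
        show (((Γ.u (tr (Sum.inl (eE e))) i + W).toNat : ℕ) : ℤ) - W = Γ.u (Sum.inl e) i
        rw [hudec]
        simp only [tr, Sum.map_inl, Equiv.symm_apply_apply]
end
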